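/- Let c_j^{(n)} be the coefficient of z^j in (1+z)(1+2z)···(1+(n−1)z). For every fixed j ≥ 1, c_{n−j}^{(n)} ≤ (n−1)! · (1 + log(n−1))^{j−1} for all n ≥ 2. In particular, for each fixed j, c_{n−j}^{(n)}/n! → 0 as n → ∞. -/

import Mathlib

/-!
Over positive reals `a_1, …, a_N`, the coefficient of `X ^ k` in `∏ (a_i X + 1)` is the elementary
symmetric function `e_k(a) = (∏ a_i) · e_m(a⁻¹)` with `k + m = N`, and `e_m(a⁻¹) ≤ (∑ a_i⁻¹) ^ m`.
For `a_i = i`, `i < n`, this gives `c_{n-j}^{(n)} ≤ (n-1)! · H_{n-1}^{j-1}`, and `H_{n-1} ≤ 1 + log (n-1)`.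
Dividing by `n! = n · (n-1)!` leaves `(1 + log (n-1))^{j-1} / n → 0`.
-/

open Finset Filter Topology

/-- The polynomial `p_n(z) = (1+z)(1+2z)···(1+(n-1)z)`. -/
noncomputable def p (n : ℕ) : Polynomial ℝ :=
  ∏ k ∈ Finset.Icc 1 (n - 1), (Polynomial.C (k : ℝ) * Polynomial.X + 1)

theorem mul_mul_pow_succ_add_mul_pow_le {R : Type*} [Field R] [LinearOrder R]
    [IsStrictOrderedRing R] {c P S : R} (hc : 0 < c) (hP : 0 ≤ P) (hS : 0 ≤ S) (m : ℕ) :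
    c * (P * S ^ (m + 1)) + P * S ^ m ≤ c * (P * (c⁻¹ + S) ^ (m + 1)) := by
  have hS' : S ≤ c⁻¹ + S := le_add_of_nonneg_left (inv_nonneg.2 hc.le)
  calc c * (P * S ^ (m + 1)) + P * S ^ m
      ≤ c * (P * ((c⁻¹ + S) ^ m * S)) + P * (c⁻¹ + S) ^ m := by rw [pow_succ]; gcongr
    _ = c * (P * (c⁻¹ + S) ^ (m + 1)) := by have := hc.ne'; rw [pow_succ]; field_simp; ring

namespace Polynomial

theorem coeff_prod_nonneg {R ι : Type*} [CommSemiring R] [PartialOrder R] [IsOrderedRing R]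
    (s : Finset ι) (f : ι → R[X]) (hf : ∀ i ∈ s, ∀ k, 0 ≤ (f i).coeff k) (k : ℕ) :
    0 ≤ (∏ i ∈ s, f i).coeff k := by
  refine Finset.prod_induction f (fun q => ∀ k, 0 ≤ q.coeff k) (fun q r hq hr k => ?_)
    (fun k => ?_) hf k
  · rw [coeff_mul]
    exact sum_nonneg fun x _ => mul_nonneg (hq _) (hr _)
  · rw [coeff_one]
    split_ifs <;> simp

theorem coeff_C_mul_X_add_one_mul_succ {R : Type*} [Semiring R] (a : R) (q : R[X]) (k : ℕ) :
    ((C a * X + 1) * q).coeff (k + 1) = a * q.coeff k + q.coeff (k + 1) := by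
  rw [add_mul, one_mul, coeff_add, mul_assoc, coeff_C_mul, coeff_X_mul]

theorem natDegree_prod_C_mul_X_add_one_le {R ι : Type*} [CommSemiring R] (s : Finset ι)
    (a : ι → R) : (∏ i ∈ s, (C (a i) * X + 1)).natDegree ≤ #s := by
  refine (natDegree_prod_le _ _).trans ((sum_le_card_nsmul s _ 1 fun i _ => ?_).trans_eq
    (smul_eq_mul _ _ |>.trans (mul_one _)))
  simpa using natDegree_linear_le (a := a i) (b := 1)

section OrderedField

variable {R ι : Type*} [Field R] [LinearOrder R] [IsStrictOrderedRing R]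

theorem coeff_prod_C_mul_X_add_one_le (s : Finset ι) (a : ι → R) (ha : ∀ i ∈ s, 0 < a i)
    {k m : ℕ} (hkm : k + m = #s) :
    (∏ i ∈ s, (C (a i) * X + 1)).coeff k ≤ (∏ i ∈ s, a i) * (∑ i ∈ s, (a i)⁻¹) ^ m := by
  classical
  induction s using Finset.induction_on generalizing k m with
  | empty =>
    obtain ⟨rfl, rfl⟩ : k = 0 ∧ m = 0 := by simpa using hkm
    simp
  | insert b s hb ih =>
    have ha' : ∀ i ∈ s, 0 < a i := fun i hi => ha i (mem_insert_of_mem hi)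
    have hP : 0 ≤ ∏ i ∈ s, a i := prod_nonneg fun i hi => (ha' i hi).le
    have hS : 0 ≤ ∑ i ∈ s, (a i)⁻¹ := sum_nonneg fun i hi => inv_nonneg.2 (ha' i hi).le
    have hb0 := ha b (mem_insert_self b s)
    rw [card_insert_of_notMem hb] at hkm
    rw [prod_insert hb, prod_insert hb, sum_insert hb, mul_assoc]
    rcases k with _ | k
    · obtain rfl : m = #s + 1 := by omega
      simp only [mul_coeff_zero, coeff_add, coeff_C_zero, coeff_X_zero, mul_zero, coeff_one_zero,
        zero_add, one_mul]
      exact (ih ha' (zero_add _)).trans <| (le_add_of_nonneg_left (by positivity)).trans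
        (mul_mul_pow_succ_add_mul_pow_le hb0 hP hS #s)
    · rw [coeff_C_mul_X_add_one_mul_succ]
      rcases m with _ | m
      · obtain rfl : k = #s := by omega
        rw [coeff_eq_zero_of_natDegree_lt ((natDegree_prod_C_mul_X_add_one_le s a).trans_lt
          (Nat.lt_succ_self #s)), add_zero]
        gcongr
        simpa using ih ha' (add_zero #s)
      · calc a b * (∏ i ∈ s, (C (a i) * X + 1)).coeff k
              + (∏ i ∈ s, (C (a i) * X + 1)).coeff (k + 1)
            ≤ a b * ((∏ i ∈ s, a i) * (∑ i ∈ s, (a i)⁻¹) ^ (m + 1))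
              + (∏ i ∈ s, a i) * (∑ i ∈ s, (a i)⁻¹) ^ m := by
              gcongr
              exacts [ih ha' (by omega), ih ha' (by omega)]
          _ ≤ _ := mul_mul_pow_succ_add_mul_pow_le hb0 hP hS m

end OrderedField

end Polynomial

theorem Real.tendsto_one_add_log_pow_div_atTop (k : ℕ) :
    Tendsto (fun x : ℝ => (1 + Real.log x) ^ k / x) atTop (𝓝 0) := by
  have h := ((Real.tendsto_pow_log_div_mul_add_atTop 1 0 k one_ne_zero).comp
    (tendsto_id.const_mul_atTop (Real.exp_pos 1))).const_mul (Real.exp 1)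
  rw [mul_zero] at h
  refine h.congr' (eventually_gt_atTop 0 |>.mono fun x hx => ?_)
  simp only [Function.comp_apply, id, one_mul, add_zero]
  rw [Real.log_mul (Real.exp_pos 1).ne' hx.ne', Real.log_exp]
  field_simp

open scoped Nat

theorem coeff_p_nonneg (n k : ℕ) : 0 ≤ (p n).coeff k :=
  Polynomial.coeff_prod_nonneg _ _
    (fun i _ k => by rcases k with _ | _ | k <;> simp [Polynomial.coeff_one]) k

theorem coeff_p_le_factorial_mul_harmonic_pow {n k m : ℕ} (hkm : k + m = n - 1) :
    (p n).coeff k ≤ (n - 1)! * (harmonic (n - 1) : ℝ) ^ m := by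
  have hfac : ∏ i ∈ Icc 1 (n - 1), (i : ℝ) = (n - 1)! := by
    rw [← Ico_add_one_right_eq_Icc, ← prod_Ico_id_eq_factorial, Nat.cast_prod]
  have h := Polynomial.coeff_prod_C_mul_X_add_one_le (Icc 1 (n - 1)) (fun i : ℕ => (i : ℝ))
    (fun i hi => by simp only [mem_Icc] at hi; exact_mod_cast hi.1) (k := k) (m := m)
    (by simpa using hkm)
  simpa [p, hfac, harmonic_eq_sum_Icc] using h

theorem coeff_p_sub_le_factorial_mul_one_add_log_pow {n j : ℕ} (hn : 2 ≤ n) (hj : 1 ≤ j) :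
    (p n).coeff (n - j) ≤ (n - 1)! * (1 + Real.log (n - 1)) ^ (j - 1) := by
  have hn' : (2 : ℝ) ≤ n := by exact_mod_cast hn
  have hH : (harmonic (n - 1) : ℝ) ≤ 1 + Real.log (n - 1) := by
    simpa [Nat.cast_sub (by omega : 1 ≤ n)] using harmonic_le_one_add_log (n - 1)
  have hL : 1 ≤ 1 + Real.log (n - 1) := le_add_of_nonneg_right (Real.log_nonneg (by linarith))
  -- `min` covers `j > n`, where `n - j` truncates to `0`
  calc (p n).coeff (n - j) ≤ (n - 1)! * (harmonic (n - 1) : ℝ) ^ min (j - 1) (n - 1) :=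
        coeff_p_le_factorial_mul_harmonic_pow (by omega)
    _ ≤ (n - 1)! * (1 + Real.log (n - 1)) ^ min (j - 1) (n - 1) := by
        gcongr
        exact_mod_cast (harmonic_pos (by omega)).le
    _ ≤ _ := by gcongr; exact min_le_left _ _

/-- For every fixed `j ≥ 1`: `c_{n-j}^{(n)} ≤ (n-1)!·(1 + log(n-1))^{j-1}` for all `n ≥ 2`,
and consequently `c_{n-j}^{(n)}/n! → 0` as `n → ∞`. -/
theorem coeff_near_top_estimate (j : ℕ) (hj : 1 ≤ j) :
    (∀ n : ℕ, 2 ≤ n →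
      (p n).coeff (n - j) ≤ (Nat.factorial (n - 1) : ℝ) * (1 + Real.log (n - 1)) ^ (j - 1)) ∧
    Tendsto (fun n : ℕ => (p n).coeff (n - j) / (Nat.factorial n : ℝ)) atTop (𝓝 0) := by
  refine ⟨fun n hn => coeff_p_sub_le_factorial_mul_one_add_log_pow hn hj, ?_⟩
  have hlim : Tendsto (fun n : ℕ => (1 + Real.log ((n : ℝ) - 1)) ^ (j - 1) / ((n : ℝ) - 1))
      atTop (𝓝 0) :=
    (Real.tendsto_one_add_log_pow_div_atTop (j - 1)).comp <| by
      simpa [sub_eq_add_neg] using tendsto_atTop_add_const_right _ (-1) tendsto_natCast_atTop_atTop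
  refine squeeze_zero' (.of_forall fun n => div_nonneg (coeff_p_nonneg _ _) (by positivity))
    ?_ hlim
  filter_upwards [eventually_ge_atTop 2] with n hn
  have hn' : (2 : ℝ) ≤ n := by exact_mod_cast hn
  have hlog := Real.log_nonneg (by linarith : (1 : ℝ) ≤ n - 1)
  calc (p n).coeff (n - j) / n !
      ≤ (n - 1)! * (1 + Real.log (n - 1)) ^ (j - 1) / (n * (n - 1)!) := by
        rw [← Nat.mul_factorial_pred (by omega : n ≠ 0)]
        push_cast
        gcongr
        exact coeff_p_sub_le_factorial_mul_one_add_log_pow hn hj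
    _ = (1 + Real.log (n - 1)) ^ (j - 1) / n := by field_simp
    _ ≤ (1 + Real.log (n - 1)) ^ (j - 1) / (n - 1) := by gcongr <;> linarith
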